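/- Let c ∈ (0, 1/2] and γ ∈ (0,1). Let P be a tree-structured Bayes net over {0,1}^n, i.e., a Bayes net whose structure assigns to each non-root node i a single parent π(i) (and roots have no parents), which is c-balanced (every entry of the conditional probability table lies in [c, 1−c]: the root marginals P(X_i = 1) for roots, and the conditional probabilities P(X_i = 1 | X_{π(i)} = b) for non-roots i and b ∈ {0,1}) and γ-non-degenerate (|P(X_i = 1 | X_{π(i)} = 1) − P(X_i = 1 | X_{π(i)} = 0)| ≥ γ for every non-root node i). Then for every non-root node i, I(X_i; X_{π(i)}) ≥ c·γ²/(2·ln 2), where X ∼ P and the mutual information is in bits. -/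

import Mathlib

/-- The tree-structured Bayes net distribution on `{0,1}^n` with parent map `par`
(`par i = none` for roots), root marginals `r i = P(X_i = 1)` and conditional
probabilities `t i b = P(X_i = 1 | X_{par i} = b)` for non-roots. -/
noncomputable def treeBN {n : ℕ} (par : Fin n → Option (Fin n))
    (r : Fin n → ℝ) (t : Fin n → Bool → ℝ) : (Fin n → Bool) → ℝ :=
  fun x => ∏ i, match par i with
    | none => if x i then r i else 1 - r i
    | some j => if x i then t i (x j) else 1 - t i (x j)

/-- Mutual information (in bits) of a joint distribution `ν` of a pair of `{0,1}`-valued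
random variables; terms where the joint probability is `0` contribute `0`
(automatic since `0 * log 0 = 0`). -/
noncomputable def miBB (ν : Bool × Bool → ℝ) : ℝ :=
  ∑ z : Bool × Bool,
    ν z * Real.logb 2 (ν z / ((∑ b : Bool, ν (z.1, b)) * (∑ a : Bool, ν (a, z.2))))

/-- The joint distribution of the pair `(X_i, X_j)` under the distribution `P` on
`{0,1}^n`. -/
noncomputable def pairLaw {n : ℕ} (P : (Fin n → Bool) → ℝ) (i j : Fin n) :
    Bool × Bool → ℝ :=
  fun ab => ∑ x ∈ Finset.univ.filter (fun x : Fin n → Bool => x i = ab.1 ∧ x j = ab.2), P x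

/-!
If a function `G` on `{0,1}^ι` ignores coordinate `k` and `F x + F (flip_k x) = 1`, then
`∑ G F = (∑ G) / 2`. The factor of node `k` has this property against everything that only
involves the nodes below `k`, because parents precede children. Peeling the nodes off from the
top therefore computes marginals: for `j = π(i)` the law of `(X_i, X_j)` is
`τ_b(a) q_b`, where `τ_b = t i b` and `q_b = P(X_j = b) ≥ c`.

The mutual information of such a mixture is `q KL(τ_T ‖ S) + (1 - q) KL(τ_F ‖ S)` (in nats,
divided by `log 2`), with `S = q τ_T + (1 - q) τ_F`. Each binary divergence is at least
`(τ_b - S)²`, and `q (τ_T - S)² + (1 - q) (τ_F - S)² = q (1 - q) (τ_T - τ_F)² ≥ c γ² / 2`.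
-/

open Finset

section Flip

variable {ι : Type*} [DecidableEq ι]

def flipAt (k : ι) (x : ι → Bool) : ι → Bool := Function.update x k (!x k)

@[simp] lemma flipAt_apply_self (k : ι) (x : ι → Bool) : flipAt k x k = !x k :=
  Function.update_self _ _ _

lemma flipAt_apply_of_ne {k l : ι} (h : l ≠ k) (x : ι → Bool) : flipAt k x l = x l :=
  Function.update_of_ne h _ _

lemma flipAt_involutive (k : ι) : Function.Involutive (flipAt k) := by
  intro x
  ext l
  rcases eq_or_ne l k with rfl | h
  · simp
  · rw [flipAt_apply_of_ne h, flipAt_apply_of_ne h]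

lemma ite_flipAt_of_ne {j k : ι} (h : j ≠ k) (b : Bool) (x : ι → Bool) :
    (if flipAt k x j = b then (1 : ℝ) else 0) = if x j = b then 1 else 0 := by
  rw [flipAt_apply_of_ne h]

lemma ite_add_ite_flipAt_self (j : ι) (b : Bool) (x : ι → Bool) :
    ((if x j = b then (1 : ℝ) else 0) + if flipAt j x j = b then 1 else 0) = 1 := by
  rw [flipAt_apply_self]
  cases x j <;> cases b <;> simp

lemma sum_mul_eq_half_of_add_flipAt [Fintype ι] (k : ι) {G F : (ι → Bool) → ℝ}
    (hG : ∀ x, G (flipAt k x) = G x) (hF : ∀ x, F x + F (flipAt k x) = 1) :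
    ∑ x, G x * F x = (∑ x, G x) / 2 := by
  have hswap : ∑ x, G x * F (flipAt k x) = ∑ x, G x * F x := by
    conv_rhs => rw [← Equiv.sum_comp ((flipAt_involutive k).toPerm _)]
    simp [hG]
  have hsum : ∑ x, G x * F x + ∑ x, G x * F (flipAt k x) = ∑ x, G x := by
    simp only [← sum_add_distrib, ← mul_add, hF, mul_one]
  linarith

end Flip

section TreeBN

variable {n : ℕ} (par : Fin n → Option (Fin n)) (r : Fin n → ℝ) (t : Fin n → Bool → ℝ)

noncomputable def treeBNFactor (x : Fin n → Bool) (k : Fin n) : ℝ :=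
  match par k with
  | none => if x k then r k else 1 - r k
  | some j => if x k then t k (x j) else 1 - t k (x j)

noncomputable def treeBNPrefix (m : ℕ) (x : Fin n → Bool) : ℝ :=
  ∏ k ∈ univ.filter (fun k : Fin n => (k : ℕ) < m), treeBNFactor par r t x k

lemma treeBN_eq_treeBNPrefix : treeBN par r t = treeBNPrefix par r t n := by
  ext x
  simp [treeBN, treeBNPrefix, treeBNFactor]

lemma treeBNPrefix_zero : treeBNPrefix par r t 0 = 1 := by
  ext x
  simp [treeBNPrefix]

lemma treeBNPrefix_succ (k : Fin n) (x : Fin n → Bool) :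
    treeBNPrefix par r t (k + 1) x = treeBNPrefix par r t k x * treeBNFactor par r t x k := by
  have : univ.filter (fun l : Fin n => (l : ℕ) < k + 1) =
      insert k (univ.filter (fun l : Fin n => (l : ℕ) < k)) := by
    ext l
    simp only [mem_filter, mem_univ, true_and, mem_insert, Fin.ext_iff]
    omega
  rw [treeBNPrefix, treeBNPrefix, this, prod_insert (by simp), mul_comm]

lemma treeBNFactor_flipAt_of_ne {k l : Fin n} (hl : l ≠ k) (hpar : par l ≠ some k)
    (x : Fin n → Bool) : treeBNFactor par r t (flipAt k x) l = treeBNFactor par r t x l := by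
  rcases hp : par l with _ | j
  · simp [treeBNFactor, hp, flipAt_apply_of_ne hl]
  · have hj : j ≠ k := by rintro rfl; exact hpar hp
    simp [treeBNFactor, hp, flipAt_apply_of_ne hl, flipAt_apply_of_ne hj]

lemma treeBNFactor_add_flipAt_self {k : Fin n} (hk : par k ≠ some k) (x : Fin n → Bool) :
    treeBNFactor par r t x k + treeBNFactor par r t (flipAt k x) k = 1 := by
  rcases hp : par k with _ | j
  · cases hx : x k <;> simp [treeBNFactor, hp, hx]
  · have hj : j ≠ k := by rintro rfl; exact hk hp
    cases hx : x k <;> simp [treeBNFactor, hp, flipAt_apply_of_ne hj, hx]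

variable {par}

lemma treeBNPrefix_flipAt (hpar : ∀ i j : Fin n, par i = some j → j < i) {m : ℕ} {k : Fin n}
    (hk : m ≤ k) (x : Fin n → Bool) :
    treeBNPrefix par r t m (flipAt k x) = treeBNPrefix par r t m x := by
  refine prod_congr rfl fun l hl => ?_
  have hlm : (l : ℕ) < m := (mem_filter.1 hl).2
  refine treeBNFactor_flipAt_of_ne par r t (by rintro rfl; omega) (fun h => ?_) x
  have := Fin.lt_def.1 (hpar l k h)
  omega

lemma sum_mul_treeBNPrefix (hpar : ∀ i j : Fin n, par i = some j → j < i)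
    {g : (Fin n → Bool) → ℝ} {m : ℕ} (hg : ∀ k : Fin n, m ≤ k → ∀ x, g (flipAt k x) = g x)
    {m' : ℕ} (hmm' : m ≤ m') (hm' : m' ≤ n) :
    ∑ x, g x * treeBNPrefix par r t m' x =
      (∑ x, g x * treeBNPrefix par r t m x) / 2 ^ (m' - m) := by
  induction m', hmm' using Nat.le_induction with
  | base => simp
  | succ m' hmm' ih =>
    set k : Fin n := ⟨m', by omega⟩
    have hflip : ∀ x, g (flipAt k x) * treeBNPrefix par r t m' (flipAt k x)
        = g x * treeBNPrefix par r t m' x := fun x => by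
      rw [hg k hmm', treeBNPrefix_flipAt r t hpar (k := k) le_rfl]
    have hk : par k ≠ some k := fun h => lt_irrefl k (hpar k k h)
    calc ∑ x, g x * treeBNPrefix par r t (m' + 1) x
        = ∑ x, g x * treeBNPrefix par r t m' x * treeBNFactor par r t x k := by
          simp only [show m' = (k : ℕ) from rfl, treeBNPrefix_succ, mul_assoc]
      _ = (∑ x, g x * treeBNPrefix par r t m' x) / 2 :=
          sum_mul_eq_half_of_add_flipAt k hflip (treeBNFactor_add_flipAt_self par r t hk)
      _ = _ := by
          rw [ih (by omega), div_div, Nat.succ_sub hmm', pow_succ]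

lemma sum_mul_treeBN (hpar : ∀ i j : Fin n, par i = some j → j < i)
    {g : (Fin n → Bool) → ℝ} {m : ℕ} (hg : ∀ k : Fin n, m ≤ k → ∀ x, g (flipAt k x) = g x)
    (hm : m ≤ n) :
    ∑ x, g x * treeBN par r t x = (∑ x, g x * treeBNPrefix par r t m x) / 2 ^ (n - m) := by
  rw [treeBN_eq_treeBNPrefix, sum_mul_treeBNPrefix r t hpar hg hm le_rfl]

lemma sum_treeBN (hpar : ∀ i j : Fin n, par i = some j → j < i) :
    ∑ x, treeBN par r t x = 1 := by
  have h := sum_mul_treeBN r t hpar (g := fun _ => 1) (fun _ _ _ => rfl) (Nat.zero_le n)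
  simp only [one_mul, treeBNPrefix_zero, Pi.one_apply, sum_const, card_univ, Fintype.card_fun,
    Fintype.card_bool, Fintype.card_fin, nsmul_eq_mul, mul_one, Nat.sub_zero] at h
  rw [h]
  simp

lemma treeBNFactor_mem_Icc {c : ℝ}
    (hbal_root : ∀ i : Fin n, par i = none → r i ∈ Set.Icc c (1 - c))
    (hbal : ∀ i j : Fin n, par i = some j → ∀ b : Bool, t i b ∈ Set.Icc c (1 - c))
    (x : Fin n → Bool) (k : Fin n) : treeBNFactor par r t x k ∈ Set.Icc c (1 - c) := by
  have hsymm : ∀ p ∈ Set.Icc c (1 - c), 1 - p ∈ Set.Icc c (1 - c) := fun p ⟨h1, h2⟩ =>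
    ⟨by linarith, by linarith⟩
  rcases hp : par k with _ | j
  · simp only [treeBNFactor, hp]
    split_ifs
    exacts [hbal_root k hp, hsymm _ (hbal_root k hp)]
  · simp only [treeBNFactor, hp]
    split_ifs
    exacts [hbal k j hp _, hsymm _ (hbal k j hp _)]

end TreeBN

noncomputable def coordLaw {n : ℕ} (P : (Fin n → Bool) → ℝ) (j : Fin n) (b : Bool) : ℝ :=
  ∑ x ∈ univ.filter (fun x : Fin n → Bool => x j = b), P x

section Marginals

variable {n : ℕ}

lemma coordLaw_eq_sum_ite_mul (P : (Fin n → Bool) → ℝ) (j : Fin n) (b : Bool) :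
    coordLaw P j b = ∑ x, (if x j = b then 1 else 0) * P x := by
  simp [coordLaw, sum_filter]

lemma pairLaw_eq_sum_ite_mul (P : (Fin n → Bool) → ℝ) (i j : Fin n) (a b : Bool) :
    pairLaw P i j (a, b) =
      ∑ x, (if x i = a then 1 else 0) * (if x j = b then 1 else 0) * P x := by
  rw [pairLaw, sum_filter]
  refine sum_congr rfl fun x _ => ?_
  split_ifs <;> simp_all

lemma coordLaw_true_add_false (P : (Fin n → Bool) → ℝ) (j : Fin n) :
    coordLaw P j true + coordLaw P j false = ∑ x, P x := by
  simp only [coordLaw_eq_sum_ite_mul, ← sum_add_distrib, ← add_mul]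
  refine sum_congr rfl fun x _ => ?_
  cases x j <;> simp

variable {par : Fin n → Option (Fin n)} (r : Fin n → ℝ) (t : Fin n → Bool → ℝ)

lemma pairLaw_treeBN_of_par_eq (hpar : ∀ i j : Fin n, par i = some j → j < i) {i j : Fin n}
    (hij : par i = some j) (a b : Bool) :
    pairLaw (treeBN par r t) i j (a, b) =
      (if a then t i b else 1 - t i b) * coordLaw (treeBN par r t) j b := by
  have hji : j < i := hpar i j hij
  set β : ℝ := if a then t i b else 1 - t i b
  set indA : (Fin n → Bool) → ℝ := fun x => if x i = a then 1 else 0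
  set indB : (Fin n → Bool) → ℝ := fun x => if x j = b then 1 else 0
  have hfactor : ∀ x, indA x * indB x * treeBNPrefix par r t (i + 1) x
      = indB x * treeBNPrefix par r t i x * indA x * β := fun x => by
    rw [treeBNPrefix_succ]
    by_cases ha : x i = a <;> by_cases hb : x j = b <;>
      simp [indA, indB, β, ha, hb, treeBNFactor, hij]
  calc pairLaw (treeBN par r t) i j (a, b)
      = (∑ x, indA x * indB x * treeBNPrefix par r t (i + 1) x) / 2 ^ (n - (i + 1)) := by
        rw [pairLaw_eq_sum_ite_mul]
        refine sum_mul_treeBN r t hpar (fun k hk x => ?_) i.isLt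
        simp only [ite_flipAt_of_ne (Fin.ne_of_lt (Fin.lt_def.2 hk)),
          ite_flipAt_of_ne (Fin.ne_of_lt (hji.trans (Fin.lt_def.2 hk)))]
    _ = β * ((∑ x, indB x * treeBNPrefix par r t i x) / 2 ^ (n - i)) := by
        simp only [hfactor, ← sum_mul]
        rw [sum_mul_eq_half_of_add_flipAt i (fun x => ?_) (ite_add_ite_flipAt_self i a),
          show n - i = n - (i + 1) + 1 by omega, pow_succ]
        · ring
        · simp only [indB, ite_flipAt_of_ne (Fin.ne_of_lt hji),
            treeBNPrefix_flipAt r t hpar le_rfl]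
    _ = β * coordLaw (treeBN par r t) j b := by
        rw [coordLaw_eq_sum_ite_mul, sum_mul_treeBN r t hpar (fun k hk x => ?_) i.isLt.le]
        exact ite_flipAt_of_ne (Fin.ne_of_lt (hji.trans_le (Fin.le_def.2 hk))) b x

lemma le_coordLaw_treeBN (hpar : ∀ i j : Fin n, par i = some j → j < i) {c : ℝ} (hc : 0 ≤ c)
    (hbal_root : ∀ i : Fin n, par i = none → r i ∈ Set.Icc c (1 - c))
    (hbal : ∀ i j : Fin n, par i = some j → ∀ b : Bool, t i b ∈ Set.Icc c (1 - c))
    (j : Fin n) (b : Bool) : c ≤ coordLaw (treeBN par r t) j b := by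
  set indB : (Fin n → Bool) → ℝ := fun x => if x j = b then 1 else 0
  have hfactor := treeBNFactor_mem_Icc r t hbal_root hbal
  have hprefix : ∀ x, 0 ≤ treeBNPrefix par r t j x := fun x =>
    prod_nonneg fun k _ => hc.trans (hfactor x k).1
  have hindB : ∀ k : Fin n, (j : ℕ) + 1 ≤ k → ∀ x, indB (flipAt k x) = indB x := fun k hk =>
    ite_flipAt_of_ne (Fin.ne_of_lt (Fin.lt_def.2 hk)) b
  calc c = c * ((∑ x, 1 * treeBNPrefix par r t j x) / 2 ^ (n - j)) := by
        rw [← sum_mul_treeBN r t hpar (fun _ _ _ => rfl) j.isLt.le]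
        simp [sum_treeBN r t hpar]
    _ = (∑ x, treeBNPrefix par r t j x * indB x * c) / 2 ^ (n - (j + 1)) := by
        rw [← sum_mul, sum_mul_eq_half_of_add_flipAt j (treeBNPrefix_flipAt r t hpar le_rfl)
          (ite_add_ite_flipAt_self j b), show n - j = n - (j + 1) + 1 by omega, pow_succ]
        simp only [one_mul]
        ring
    _ ≤ (∑ x, indB x * treeBNPrefix par r t (j + 1) x) / 2 ^ (n - (j + 1)) := by
        refine div_le_div_of_nonneg_right (sum_le_sum fun x _ => ?_) (by positivity)
        rw [treeBNPrefix_succ]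
        by_cases hb : x j = b
        · simp only [indB, hb, if_true, mul_one, one_mul]
          exact mul_le_mul_of_nonneg_left (hfactor x j).1 (hprefix x)
        · simp [indB, hb]
    _ = coordLaw (treeBN par r t) j b := by
        rw [coordLaw_eq_sum_ite_mul, sum_mul_treeBN r t hpar hindB j.isLt]

end Marginals

section BinaryKL

open Real Set

lemma le_of_hasDerivAt_of_sub_mul_nonneg {f f' : ℝ → ℝ} {a b p x : ℝ}
    (hf : ∀ y ∈ Ioo a b, HasDerivAt f (f' y) y) (hsign : ∀ y ∈ Ioo a b, 0 ≤ (y - p) * f' y)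
    (hp : p ∈ Ioo a b) (hx : x ∈ Ioo a b) : f p ≤ f x := by
  have hsub : ∀ {u v}, u ∈ Ioo a b → v ∈ Ioo a b → Icc u v ⊆ Ioo a b :=
    fun hu hv y hy => ⟨hu.1.trans_le hy.1, hy.2.trans_lt hv.2⟩
  have hcont : ∀ {u v}, u ∈ Ioo a b → v ∈ Ioo a b → ContinuousOn f (Icc u v) :=
    fun hu hv y hy => (hf y (hsub hu hv hy)).continuousAt.continuousWithinAt
  have hderiv : ∀ {u v}, u ∈ Ioo a b → v ∈ Ioo a b →
      ∀ y ∈ interior (Icc u v), HasDerivWithinAt f (f' y) (interior (Icc u v)) y :=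
    fun hu hv y hy => (hf y (hsub hu hv (interior_subset hy))).hasDerivWithinAt
  rcases le_total p x with hpx | hxp
  · refine monotoneOn_of_hasDerivWithinAt_nonneg (convex_Icc p x) (hcont hp hx) (hderiv hp hx)
      (fun y hy => ?_) (left_mem_Icc.2 hpx) (right_mem_Icc.2 hpx) hpx
    rw [interior_Icc] at hy
    exact nonneg_of_mul_nonneg_right (hsign y (hsub hp hx (Ioo_subset_Icc_self hy)))
      (sub_pos.2 hy.1)
  · refine antitoneOn_of_hasDerivWithinAt_nonpos (convex_Icc x p) (hcont hx hp) (hderiv hx hp)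
      (fun y hy => ?_) (left_mem_Icc.2 hxp) (right_mem_Icc.2 hxp) hxp
    rw [interior_Icc] at hy
    exact nonpos_of_mul_nonneg_right (hsign y (hsub hx hp (Ioo_subset_Icc_self hy)))
      (sub_neg.2 hy.2)

noncomputable def binKL (p ρ : ℝ) : ℝ := p * log (p / ρ) + (1 - p) * log ((1 - p) / (1 - ρ))

lemma hasDerivAt_binKL_right {p ρ : ℝ} (hp : p ∈ Ioo (0 : ℝ) 1) (hρ : ρ ∈ Ioo (0 : ℝ) 1) :
    HasDerivAt (binKL p) ((ρ - p) / (ρ * (1 - ρ))) ρ := by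
  obtain ⟨hp0, hp1⟩ := hp
  obtain ⟨hρ0, hρ1⟩ := hρ
  have h1 := ((hasDerivAt_const ρ p).div (hasDerivAt_id ρ) hρ0.ne').log
    (div_pos hp0 hρ0).ne'
  have h2 := ((hasDerivAt_const ρ (1 - p)).div ((hasDerivAt_id ρ).const_sub 1)
    (sub_pos.2 hρ1).ne').log (div_pos (sub_pos.2 hp1) (sub_pos.2 hρ1)).ne'
  refine ((h1.const_mul p).add (h2.const_mul (1 - p))).congr_deriv ?_
  simp only [id, Pi.div_apply]
  field_simp
  ring

lemma sq_sub_le_binKL {p ρ : ℝ} (hp : p ∈ Ioo (0 : ℝ) 1) (hρ : ρ ∈ Ioo (0 : ℝ) 1) :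
    (p - ρ) ^ 2 ≤ binKL p ρ := by
  have hderiv : ∀ y ∈ Ioo (0 : ℝ) 1, HasDerivAt (fun y => binKL p y - (p - y) ^ 2)
      ((y - p) / (y * (1 - y)) + 2 * (p - y)) y := fun y hy => by
    refine ((hasDerivAt_binKL_right hp hy).sub
      (((hasDerivAt_id y).const_sub p).pow 2)).congr_deriv ?_
    simp only [id]
    ring
  have hsign : ∀ y ∈ Ioo (0 : ℝ) 1, 0 ≤ (y - p) * ((y - p) / (y * (1 - y)) + 2 * (p - y)) :=
    fun y ⟨hy0, hy1⟩ => by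
      have hy : 0 < y * (1 - y) := mul_pos hy0 (sub_pos.2 hy1)
      have hquarter : y * (1 - y) * 4 ≤ 1 := by nlinarith [sq_nonneg (2 * y - 1)]
      have : (y - p) * ((y - p) / (y * (1 - y)) + 2 * (p - y))
          = (y - p) ^ 2 * (1 - 2 * (y * (1 - y))) / (y * (1 - y)) := by
        field_simp
        ring
      rw [this]
      exact div_nonneg (mul_nonneg (sq_nonneg _) (by linarith)) hy.le
  have := le_of_hasDerivAt_of_sub_mul_nonneg hderiv hsign hp hρ
  have hpp : binKL p p = 0 := by
    simp [binKL, div_self hp.1.ne', div_self (sub_pos.2 hp.2).ne']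
  rw [hpp, sub_self, zero_pow two_ne_zero] at this
  linarith

end BinaryKL

section MutualInformation

open Real

noncomputable def mixtureLaw (q : ℝ) (τ : Bool → ℝ) : Bool × Bool → ℝ :=
  fun ab => (if ab.1 then τ ab.2 else 1 - τ ab.2) * (if ab.2 then q else 1 - q)

lemma miBB_mixture {q : ℝ} {τ : Bool → ℝ} (hq0 : q ≠ 0) (hq1 : 1 - q ≠ 0) :
    miBB (mixtureLaw q τ) =
      (q * binKL (τ true) (q * τ true + (1 - q) * τ false)
        + (1 - q) * binKL (τ false) (q * τ true + (1 - q) * τ false)) / log 2 := by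
  set S := q * τ true + (1 - q) * τ false with hS
  simp only [miBB, mixtureLaw, Fintype.sum_prod_type, Fintype.sum_bool, if_true,
    Bool.false_eq_true, if_false]
  rw [show τ true * q + (1 - τ true) * q = q by ring,
    show τ false * (1 - q) + (1 - τ false) * (1 - q) = 1 - q by ring,
    show τ true * q + τ false * (1 - q) = S by ring,
    show (1 - τ true) * q + (1 - τ false) * (1 - q) = 1 - S by ring,
    mul_div_mul_right _ _ hq0, mul_div_mul_right _ _ hq0,
    mul_div_mul_right _ _ hq1, mul_div_mul_right _ _ hq1]
  simp only [binKL, logb]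
  ring

lemma le_miBB_mixture {c γ q : ℝ} {τ : Bool → ℝ} (hc : 0 < c) (hγ : 0 ≤ γ)
    (hq : q ∈ Set.Icc c (1 - c)) (hτ : ∀ b, τ b ∈ Set.Icc c (1 - c))
    (hnd : γ ≤ |τ true - τ false|) :
    c * γ ^ 2 / (2 * log 2) ≤
      miBB (mixtureLaw q τ) := by
  obtain ⟨hcq, hqc⟩ := hq
  have hq0 : 0 < q := hc.trans_le hcq
  have hq1 : 0 < 1 - q := by linarith
  have hτ01 : ∀ b, τ b ∈ Set.Ioo (0 : ℝ) 1 := fun b =>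
    ⟨hc.trans_le (hτ b).1, by linarith [(hτ b).2]⟩
  set S := q * τ true + (1 - q) * τ false with hS
  have hS01 : S ∈ Set.Ioo (0 : ℝ) 1 := by
    obtain ⟨h1, h2⟩ := hτ01 true
    obtain ⟨h3, h4⟩ := hτ01 false
    constructor <;> nlinarith
  have hγ2 : γ ^ 2 ≤ (τ true - τ false) ^ 2 :=
    sq_abs (τ true - τ false) ▸ pow_le_pow_left₀ hγ hnd 2
  have hq1q : c / 2 ≤ q * (1 - q) := by nlinarith
  rw [miBB_mixture hq0.ne' hq1.ne', ← div_div]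
  refine div_le_div_of_nonneg_right ?_ (log_pos one_lt_two).le
  calc c * γ ^ 2 / 2 ≤ q * (1 - q) * (τ true - τ false) ^ 2 := by nlinarith
    _ = q * (τ true - S) ^ 2 + (1 - q) * (τ false - S) ^ 2 := by rw [hS]; ring
    _ ≤ _ := add_le_add (mul_le_mul_of_nonneg_left (sq_sub_le_binKL (hτ01 true) hS01) hq0.le)
          (mul_le_mul_of_nonneg_left (sq_sub_le_binKL (hτ01 false) hS01) hq1.le)

end MutualInformation

theorem stmt16 (n : ℕ) (c γ : ℝ) (hc : c ∈ Set.Ioc (0:ℝ) (1/2)) (hγ : γ ∈ Set.Ioo (0:ℝ) 1)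
    (par : Fin n → Option (Fin n)) (hpar : ∀ i j : Fin n, par i = some j → j < i)
    (r : Fin n → ℝ) (t : Fin n → Bool → ℝ)
    (hbal_root : ∀ i : Fin n, par i = none → r i ∈ Set.Icc c (1 - c))
    (hbal : ∀ i j : Fin n, par i = some j → ∀ b : Bool, t i b ∈ Set.Icc c (1 - c))
    (hnondeg : ∀ i j : Fin n, par i = some j → γ ≤ |t i true - t i false|)
    (i j : Fin n) (hij : par i = some j) :
    c * γ ^ 2 / (2 * Real.log 2) ≤ miBB (pairLaw (treeBN par r t) i j) := by
  have hmarg := le_coordLaw_treeBN r t hpar hc.1.le hbal_root hbal j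
  set q := coordLaw (treeBN par r t) j true
  have hfalse : coordLaw (treeBN par r t) j false = 1 - q := by
    linarith [coordLaw_true_add_false (treeBN par r t) j, sum_treeBN r t hpar]
  have hlaw : pairLaw (treeBN par r t) i j = mixtureLaw q (t i) := by
    funext ⟨a, b⟩
    rw [pairLaw_treeBN_of_par_eq r t hpar hij]
    cases b <;> simp [mixtureLaw, hfalse, q]
  rw [hlaw]
  exact le_miBB_mixture hc.1 hγ.1.le ⟨hmarg true, by linarith [hmarg false]⟩ (hbal i j hij)
    (hnondeg i j hij)
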